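/- arXiv:2410.10066 — 2 statements merged into one kernel-verified Lean document; each statement's English description precedes it below -/
import Mathlib

section
/- For all real numbers 0 < r < s with s - r ∈ (0,1), sup_{y ∈ ℝ} |(1/√r)φ(y/√r) - (1/√s)φ(y/√s)| ≤ (1/√r - 1/√s) + (1/√s)(√(s-r) + 1 - exp(-√(s-r)/r)), where φ is the standard normal density. -/
noncomputable def stdNormal (x : ℝ) : ℝ :=
  (1 / Real.sqrt (2 * Real.pi)) * Real.exp (-x ^ 2 / 2)

/-!
Write `u = y² / (2s)`, so that the two Gaussian exponents are `u` and `u + u·δ/r` with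
`δ = s - r`. Splitting off the difference of the prefactors, it remains to bound
`e^{-u} - e^{-u - uδ/r}` by `√δ + 1 - e^{-√δ/r}`. If `u√δ ≤ 1` this difference is at most
`1 - e^{-√δ/r}`; otherwise `e^{-u} ≤ e^{-1/√δ} ≤ √δ`.
-/

open Real

lemma exp_neg_inv_le {a : ℝ} (ha : 0 < a) : exp (-a⁻¹) ≤ a := by
  rw [exp_neg, inv_le_comm₀ (exp_pos _) ha]
  linarith [add_one_le_exp a⁻¹]

lemma exp_neg_sub_exp_neg_le {u a t : ℝ} (hu : 0 ≤ u) (ha : 0 < a) (ht : 0 ≤ t) :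
    exp (-u) - exp (-(u + u * a * t)) ≤ a + 1 - exp (-t) := by
  have hexp_t : exp (-t) ≤ 1 := exp_le_one_iff.mpr (by linarith)
  rcases le_or_gt (u * a) 1 with hua | hua
  · have hsplit : exp (-(u + u * a * t)) = exp (-u) * exp (-(u * a * t)) := by
      rw [← exp_add]; ring_nf
    have hexp_u : exp (-u) ≤ 1 := exp_le_one_iff.mpr (by linarith)
    have hmono : exp (-t) ≤ exp (-(u * a * t)) := exp_le_exp.mpr (by nlinarith)
    have hexp_uat : exp (-(u * a * t)) ≤ 1 := exp_le_one_iff.mpr (neg_nonpos.mpr (by positivity))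
    rw [hsplit]
    nlinarith [exp_pos (-u)]
  · have hexp_u : exp (-u) ≤ a :=
      (exp_le_exp.mpr (neg_le_neg ((inv_le_iff_one_le_mul₀ ha).mpr (by linarith)))).trans
        (exp_neg_inv_le ha)
    linarith [exp_pos (-(u + u * a * t))]

lemma abs_mul_sub_mul_le {p q x z : ℝ} (hq : 0 ≤ q) (hqp : q ≤ p) (hx : 0 ≤ x) (hx1 : x ≤ 1)
    (hxz : x ≤ z) : |p * x - q * z| ≤ (p - q) + q * (z - x) := by
  have hpx : 0 ≤ (p - q) * x := mul_nonneg (by linarith) hx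
  have hqz : 0 ≤ q * (z - x) := mul_nonneg hq (by linarith)
  have hpx1 : (p - q) * x ≤ p - q := mul_le_of_le_one_right (by linarith) hx1
  rw [abs_le]
  constructor <;> nlinarith

lemma one_div_sqrt_two_pi_le_one : 1 / √(2 * π) ≤ 1 := by
  rw [div_le_one (by positivity), one_le_sqrt]
  linarith [pi_gt_three]

lemma stdNormal_eq (x : ℝ) : stdNormal x = 1 / √(2 * π) * exp (-(x ^ 2 / 2)) := by
  rw [stdNormal, neg_div]

lemma stdNormal_nonneg (x : ℝ) : 0 ≤ stdNormal x := by
  unfold stdNormal; positivity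

lemma stdNormal_le_one (x : ℝ) : stdNormal x ≤ 1 := by
  rw [stdNormal_eq]
  exact mul_le_one₀ one_div_sqrt_two_pi_le_one (exp_pos _).le
    (exp_le_one_iff.mpr (by nlinarith [sq_nonneg x]))

lemma stdNormal_le_of_sq_le {x z : ℝ} (h : x ^ 2 ≤ z ^ 2) : stdNormal z ≤ stdNormal x := by
  simp only [stdNormal_eq]
  gcongr

lemma stdNormal_sub_le_of_sq_le {x z : ℝ} (h : x ^ 2 ≤ z ^ 2) :
    stdNormal x - stdNormal z ≤ exp (-(x ^ 2 / 2)) - exp (-(z ^ 2 / 2)) := by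
  simp only [stdNormal_eq, ← mul_sub]
  exact mul_le_of_le_one_left (sub_nonneg.mpr (by gcongr)) one_div_sqrt_two_pi_le_one

theorem stmt_2_general (r s : ℝ) (hr : 0 < r) (hrs : r < s) (y : ℝ) :
    |(1 / Real.sqrt r) * stdNormal (y / Real.sqrt r)
      - (1 / Real.sqrt s) * stdNormal (y / Real.sqrt s)|
      ≤ (1 / Real.sqrt r - 1 / Real.sqrt s)
        + (1 / Real.sqrt s) *
          (Real.sqrt (s - r) + 1 - Real.exp (-Real.sqrt (s - r) / r)) := by
  have hs : 0 < s := hr.trans hrs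
  set A := √(s - r)
  set u := (y / √s) ^ 2 / 2
  have hA : 0 < A := sqrt_pos.mpr (sub_pos.mpr hrs)
  have hexponent : (y / √r) ^ 2 / 2 = u + u * A * (A / r) := by
    rw [mul_assoc, mul_div_assoc', ← pow_two, sq_sqrt (sub_pos.mpr hrs).le]
    simp only [u, div_pow, sq_sqrt hr.le, sq_sqrt hs.le]
    field_simp
    ring
  have hsq : (y / √s) ^ 2 ≤ (y / √r) ^ 2 := by
    simp only [div_pow, sq_sqrt hr.le, sq_sqrt hs.le]
    gcongr
  calc _ ≤ (1 / √r - 1 / √s) + 1 / √s * (stdNormal (y / √s) - stdNormal (y / √r)) :=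
        abs_mul_sub_mul_le (by positivity) (by gcongr) (stdNormal_nonneg _)
          (stdNormal_le_one _) (stdNormal_le_of_sq_le hsq)
    _ ≤ (1 / √r - 1 / √s) + 1 / √s * (exp (-u) - exp (-(u + u * A * (A / r)))) := by
        rw [← hexponent]
        gcongr _ + _ * ?_
        exact stdNormal_sub_le_of_sq_le hsq
    _ ≤ _ := by
        rw [neg_div]
        gcongr _ + _ * ?_
        exact exp_neg_sub_exp_neg_le (by positivity) hA (by positivity)

theorem stmt_2 (r s : ℝ) (hr : 0 < r) (hrs : r < s) (h1 : s - r < 1) (y : ℝ) :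
    |(1 / Real.sqrt r) * stdNormal (y / Real.sqrt r)
      - (1 / Real.sqrt s) * stdNormal (y / Real.sqrt s)|
      ≤ (1 / Real.sqrt r - 1 / Real.sqrt s)
        + (1 / Real.sqrt s) *
          (Real.sqrt (s - r) + 1 - Real.exp (-Real.sqrt (s - r) / r)) :=
  stmt_2_general r s hr hrs y
end

section
/- For r ∈ (0, T] and q ∈ (0,1), ∫_0^r (1/√s - 1/√(s+q) + (1/√(s+q))(√q + 1 - e^{-√q/s})) ds ≤ C(T) q^{1/8} for a constant C(T) depending only on T. -/
/-!
Write `y = √q / s`. The integrand is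
`(1 / √s) (1 - √s / √(s + q)) + √q / √(s + q) + (1 - exp (-y)) / √(s + q)`, and
`1 - √s / √(s + q) ≤ q / s ≤ y`. Hence the first and last terms are at most
`s ^ (-1/2) * min 1 y ≤ s ^ (-1/2) * y ^ (1/4) = q ^ (1/8) * s ^ (-3/4)`, and the middle one is at most
`q ^ (1/8) * s ^ (-1/2)`. This majorant is integrable at `0`, and its integral over `[0, r]` is
`O(q ^ (1/8))` uniformly in `r ≤ T`.
-/

open MeasureTheory Real Set

lemma one_sub_exp_neg_le_min (y : ℝ) : 1 - exp (-y) ≤ min 1 y :=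
  le_min (by linarith [exp_pos (-y)]) (by linarith [add_one_le_exp (-y)])

lemma min_one_le_rpow {y p : ℝ} (hy : 0 ≤ y) (hp0 : 0 ≤ p) (hp1 : p ≤ 1) :
    min 1 y ≤ y ^ p := by
  rcases le_total y 1 with h | h
  · exact (min_le_right _ _).trans (self_le_rpow_of_le_one hy h hp1)
  · exact (min_le_left _ _).trans (one_le_rpow h hp0)

lemma one_div_sub_one_div_le {a b : ℝ} (ha : 0 < a) (hab : a ≤ b) :
    1 / a - 1 / b ≤ 1 / a * ((b ^ 2 - a ^ 2) / a ^ 2) := by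
  have hb : 0 < b := ha.trans_le hab
  rw [div_sub_div _ _ ha.ne' hb.ne', div_le_iff₀ (by positivity)]
  field_simp
  nlinarith [mul_le_mul_of_nonneg_left hab (sub_nonneg.2 hab), mul_pos ha hb]

lemma one_div_sqrt_add_le {s q : ℝ} (hs : 0 < s) (hq : 0 ≤ q) : 1 / √(s + q) ≤ 1 / √s :=
  one_div_le_one_div_of_le (sqrt_pos.2 hs) (sqrt_le_sqrt (by linarith))

lemma one_div_sqrt_sub_one_div_sqrt_add_le {s q : ℝ} (hs : 0 < s) (hq : 0 ≤ q) :
    1 / √s - 1 / √(s + q) ≤ 1 / √s * min 1 (q / s) := by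
  have ha : 0 < √s := sqrt_pos.2 hs
  have hab : √s ≤ √(s + q) := sqrt_le_sqrt (by linarith)
  rw [mul_min_of_nonneg _ _ (by positivity), mul_one]
  refine le_min (by linarith [one_div_pos.2 (ha.trans_le hab)]) ?_
  simpa [sq_sqrt hs.le, sq_sqrt (by linarith : 0 ≤ s + q)] using one_div_sub_one_div_le ha hab

lemma one_div_sqrt_eq_rpow {s : ℝ} (hs : 0 ≤ s) : 1 / √s = s ^ (-(1 : ℝ) / 2) := by
  rw [one_div, sqrt_eq_rpow, ← rpow_neg hs, neg_div]

lemma one_div_sqrt_mul_rpow {s q : ℝ} (hs : 0 < s) (hq : 0 ≤ q) :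
    1 / √s * (√q / s) ^ ((1 : ℝ) / 4) = q ^ ((1 : ℝ) / 8) * s ^ (-(3 : ℝ) / 4) := by
  have hq8 : √q ^ ((1 : ℝ) / 4) = q ^ ((1 : ℝ) / 8) := by
    rw [sqrt_eq_rpow, ← rpow_mul hq]; norm_num
  rw [one_div_sqrt_eq_rpow hs.le, div_rpow (sqrt_nonneg q) hs.le, hq8, div_eq_mul_inv (q ^ _),
    ← rpow_neg hs.le, mul_left_comm, ← rpow_add hs]
  norm_num

lemma one_div_sqrt_mul_min_le {s q : ℝ} (hs : 0 < s) (hq : 0 ≤ q) :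
    1 / √s * min 1 (√q / s) ≤ q ^ ((1 : ℝ) / 8) * s ^ (-(3 : ℝ) / 4) := by
  rw [← one_div_sqrt_mul_rpow hs hq]
  gcongr
  exact min_one_le_rpow (by positivity) (by norm_num) (by norm_num)

lemma exp_neg_sqrt_div_le_one (q : ℝ) {s : ℝ} (hs : 0 ≤ s) : exp (-√q / s) ≤ 1 :=
  exp_le_one_iff.2 (div_nonpos_of_nonpos_of_nonneg (neg_nonpos.2 (sqrt_nonneg q)) hs)

noncomputable def integrand (q s : ℝ) : ℝ :=
  1 / √s - 1 / √(s + q) + (1 / √(s + q)) * (√q + 1 - exp (-√q / s))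

lemma integrand_nonneg {s q : ℝ} (hs : 0 < s) (hq : 0 ≤ q) : 0 ≤ integrand q s := by
  have hexp := exp_neg_sqrt_div_le_one q hs.le
  have hrest : 0 ≤ 1 / √(s + q) * (√q + 1 - exp (-√q / s)) :=
    mul_nonneg (by positivity) (by linarith [sqrt_nonneg q])
  unfold integrand
  linarith [one_div_sqrt_add_le hs hq]

lemma integrand_le {s q : ℝ} (hs : 0 < s) (hq0 : 0 ≤ q) (hq1 : q ≤ 1) :
    integrand q s ≤ q ^ ((1 : ℝ) / 8) * (2 * s ^ (-(3 : ℝ) / 4) + s ^ (-(1 : ℝ) / 2)) := by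
  have hab := one_div_sqrt_add_le hs hq0
  have hq_le : q ≤ √q := le_sqrt_of_sq_le (by nlinarith)
  have hsqrt_le : √q ≤ q ^ ((1 : ℝ) / 8) := by
    rw [sqrt_eq_rpow]; exact rpow_le_rpow_of_exponent_ge' hq0 hq1 (by norm_num) (by norm_num)
  have hdiff : 1 / √s - 1 / √(s + q) ≤ 1 / √s * min 1 (√q / s) := by
    refine (one_div_sqrt_sub_one_div_sqrt_add_le hs hq0).trans ?_
    gcongr
  have hexp : 1 / √(s + q) * (1 - exp (-√q / s)) ≤ 1 / √s * min 1 (√q / s) := by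
    refine mul_le_mul hab ?_ (by linarith [exp_neg_sqrt_div_le_one q hs.le]) (by positivity)
    simpa only [neg_div] using one_sub_exp_neg_le_min (√q / s)
  have hshift : 1 / √(s + q) * √q ≤ q ^ ((1 : ℝ) / 8) * s ^ (-(1 : ℝ) / 2) := by
    rw [← one_div_sqrt_eq_rpow hs.le, mul_comm]
    exact mul_le_mul hsqrt_le hab (by positivity) (by positivity)
  have hmin := one_div_sqrt_mul_min_le hs hq0
  calc integrand q s
      = (1 / √s - 1 / √(s + q)) + 1 / √(s + q) * √q
          + 1 / √(s + q) * (1 - exp (-√q / s)) := by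
        unfold integrand; ring
    _ ≤ _ := by linarith

lemma integral_mono_of_nonneg_Ioc {f g : ℝ → ℝ} {a b : ℝ} (hab : a ≤ b)
    (hg : IntervalIntegrable g volume a b) (hf : ∀ x ∈ Ioc a b, 0 ≤ f x)
    (hfg : ∀ x ∈ Ioc a b, f x ≤ g x) : ∫ x in a..b, f x ≤ ∫ x in a..b, g x := by
  rw [intervalIntegral.integral_of_le hab, intervalIntegral.integral_of_le hab]
  exact integral_mono_of_nonneg (ae_restrict_of_forall_mem measurableSet_Ioc hf) hg.1
    (ae_restrict_of_forall_mem measurableSet_Ioc hfg)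

lemma integral_zero_rpow {p : ℝ} (hp : -1 < p) (b : ℝ) :
    ∫ x in (0 : ℝ)..b, x ^ p = b ^ (p + 1) / (p + 1) := by
  rw [integral_rpow (Or.inl hp), zero_rpow (by linarith), sub_zero]

theorem stmt_13 (T : ℝ) (hT : 0 < T) :
    ∃ C : ℝ, 0 < C ∧ ∀ r ∈ Set.Ioc (0 : ℝ) T, ∀ q ∈ Set.Ioo (0 : ℝ) 1,
      (∫ s in (0 : ℝ)..r,
          (1 / Real.sqrt s - 1 / Real.sqrt (s + q)
            + (1 / Real.sqrt (s + q))
              * (Real.sqrt q + 1 - Real.exp (-Real.sqrt q / s))))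
        ≤ C * q ^ ((1 : ℝ) / 8) := by
  refine ⟨8 * T ^ ((1 : ℝ) / 4) + 2 * T ^ ((1 : ℝ) / 2), by positivity, ?_⟩
  rintro r ⟨hr0, hrT⟩ q ⟨hq0, hq1⟩
  have hI34 : IntervalIntegrable (fun s : ℝ => s ^ (-(3 : ℝ) / 4)) volume 0 r :=
    intervalIntegral.intervalIntegrable_rpow' (by norm_num)
  have hI12 : IntervalIntegrable (fun s : ℝ => s ^ (-(1 : ℝ) / 2)) volume 0 r :=
    intervalIntegral.intervalIntegrable_rpow' (by norm_num)
  calc ∫ s in (0 : ℝ)..r, integrand q s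
      ≤ ∫ s in (0 : ℝ)..r, q ^ ((1 : ℝ) / 8) * (2 * s ^ (-(3 : ℝ) / 4) + s ^ (-(1 : ℝ) / 2)) :=
        integral_mono_of_nonneg_Ioc hr0.le (((hI34.const_mul 2).add hI12).const_mul _)
          (fun s hs => integrand_nonneg hs.1 hq0.le) (fun s hs => integrand_le hs.1 hq0.le hq1.le)
    _ = q ^ ((1 : ℝ) / 8) * (8 * r ^ ((1 : ℝ) / 4) + 2 * r ^ ((1 : ℝ) / 2)) := by
        rw [intervalIntegral.integral_const_mul,
          intervalIntegral.integral_add (hI34.const_mul 2) hI12,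
          intervalIntegral.integral_const_mul, integral_zero_rpow (by norm_num),
          integral_zero_rpow (by norm_num)]
        congr 1
        norm_num
        ring
    _ ≤ (8 * T ^ ((1 : ℝ) / 4) + 2 * T ^ ((1 : ℝ) / 2)) * q ^ ((1 : ℝ) / 8) := by
        rw [mul_comm]
        gcongr
end
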